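/- Let a ∈ (0,1], t ≥ 0, and let F : ℝ → ℝ be twice differentiable on an interval around [t, ω] with F > 0, F' < 0, F'' < 0 on (t, ω), and F(ω) = 0. Define ψ(x) = x·F'(x + t) + a·F(x + t) for x ∈ [0, ω − t]. Then ψ(0) > 0, ψ(ω − t) < 0, and ψ is strictly decreasing on (0, ω − t); consequently there exists a unique λ ∈ (0, ω − t) with ψ(λ) = 0. -/

import Mathlib

/-!
For `ψ = foc F a t` and `y = x + t`, `ψ' = (1 + a) F'(y) + x F''(y)` is negative on
`(0, ω - t)` because `F'` and `F''` are, so `ψ` is strictly decreasing there. At the ends,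
`ψ 0 = a F(t) > 0` since `F` decreases to `F ω = 0`, and `ψ (ω - t) = (ω - t) F'(ω) < 0` since
`F'` decreases; the intermediate value theorem then gives the zero, and strict monotonicity
its uniqueness.
-/

open Set

noncomputable def foc (F : ℝ → ℝ) (a t x : ℝ) : ℝ := x * deriv F (x + t) + a * F (x + t)

lemma strictAntiOn_Icc_of_deriv_neg_Ioo {f : ℝ → ℝ} {b c : ℝ}
    (hf : ContinuousOn f (Icc b c))
    (hf' : ∀ y ∈ Ioo b c, deriv f y < 0) : StrictAntiOn f (Icc b c) :=
  strictAntiOn_of_deriv_neg (convex_Icc b c) hf (by rwa [interior_Icc])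

lemma existsUnique_zero_of_strictAntiOn {f : ℝ → ℝ} {b : ℝ} (hb : 0 ≤ b)
    (hf : ContinuousOn f (Icc 0 b)) (hanti : StrictAntiOn f (Ioo 0 b))
    (h0 : 0 < f 0) (hb' : f b < 0) : ∃! l, l ∈ Ioo 0 b ∧ f l = 0 := by
  obtain ⟨l, hl, hfl⟩ := intermediate_value_Ioo' hb hf ⟨hb', h0⟩
  exact ⟨l, ⟨hl, hfl⟩, fun y ⟨hy, hfy⟩ => hanti.injOn hy hl (hfy.trans hfl.symm)⟩

section foc

variable {F : ℝ → ℝ} {a t : ℝ}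

lemma hasDerivAt_foc {x : ℝ} (hF : DifferentiableAt ℝ F (x + t))
    (hF' : DifferentiableAt ℝ (deriv F) (x + t)) :
    HasDerivAt (foc F a t) ((1 + a) * deriv F (x + t) + x * deriv (deriv F) (x + t)) x := by
  refine (((hasDerivAt_id' x).mul (hF'.hasDerivAt.comp_add_const x t)).add
    ((hF.hasDerivAt.comp_add_const x t).const_mul a)).congr_deriv ?_
  ring

lemma continuous_foc (hF : Differentiable ℝ F) (hF' : Differentiable ℝ (deriv F)) :
    Continuous (foc F a t) :=
  continuous_iff_continuousAt.2 fun _ => (hasDerivAt_foc (hF _) (hF' _)).continuousAt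

lemma strictAntiOn_foc {ω : ℝ} (ha : -1 < a) (hF : Differentiable ℝ F)
    (hF' : Differentiable ℝ (deriv F)) (hF'neg : ∀ y ∈ Ioo t ω, deriv F y < 0)
    (hF''neg : ∀ y ∈ Ioo t ω, deriv (deriv F) y < 0) :
    StrictAntiOn (foc F a t) (Ioo 0 (ω - t)) := by
  refine strictAntiOn_of_deriv_neg (convex_Ioo 0 (ω - t))
    (continuous_foc hF hF').continuousOn fun x hx => ?_
  rw [interior_Ioo] at hx
  have hy : x + t ∈ Ioo t ω := ⟨by linarith [hx.1], by linarith [hx.2]⟩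
  rw [(hasDerivAt_foc (hF _) (hF' _)).deriv]
  have h1 := hF'neg _ hy
  have h2 := hF''neg _ hy
  nlinarith [hx.1]

end foc

theorem stmt_6_general (F : ℝ → ℝ) (a t ω : ℝ)
    (ha : a ∈ Set.Ioc (0:ℝ) 1) (htω : t < ω)
    (hd1 : ∀ x, DifferentiableAt ℝ F x) (hd2 : ∀ x, DifferentiableAt ℝ (deriv F) x)
    (hF' : ∀ y ∈ Set.Ioo t ω, deriv F y < 0)
    (hF'' : ∀ y ∈ Set.Ioo t ω, deriv (deriv F) y < 0)
    (hFω : F ω = 0) :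
    0 < (fun x : ℝ => x * deriv F (x + t) + a * F (x + t)) 0 ∧
    (fun x : ℝ => x * deriv F (x + t) + a * F (x + t)) (ω - t) < 0 ∧
    StrictAntiOn (fun x : ℝ => x * deriv F (x + t) + a * F (x + t)) (Set.Ioo 0 (ω - t)) ∧
    ∃! l : ℝ, l ∈ Set.Ioo 0 (ω - t) ∧ l * deriv F (l + t) + a * F (l + t) = 0 := by
  have hm : (t + ω) / 2 ∈ Ioo t ω := ⟨by linarith, by linarith⟩
  have hFanti :=
    strictAntiOn_Icc_of_deriv_neg_Ioo (Differentiable.continuous hd1).continuousOn hF'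
  have hF'anti :=
    strictAntiOn_Icc_of_deriv_neg_Ioo (Differentiable.continuous hd2).continuousOn hF''
  have hFt : 0 < F t := hFω ▸ hFanti (left_mem_Icc.2 htω.le) (right_mem_Icc.2 htω.le) htω
  have hF'ω : deriv F ω < 0 :=
    (hF'anti (Ioo_subset_Icc_self hm) (right_mem_Icc.2 htω.le) hm.2).trans (hF' _ hm)
  have hψ0 : 0 < foc F a t 0 := by simpa [foc] using mul_pos ha.1 hFt
  have hψω : foc F a t (ω - t) < 0 := by
    simpa [foc, hFω] using mul_neg_of_pos_of_neg (sub_pos.2 htω) hF'ω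
  have hψanti : StrictAntiOn (foc F a t) (Ioo 0 (ω - t)) :=
    strictAntiOn_foc (by linarith [ha.1]) hd1 hd2 hF' hF''
  exact ⟨hψ0, hψω, hψanti, existsUnique_zero_of_strictAntiOn (sub_pos.2 htω).le
    (continuous_foc hd1 hd2).continuousOn hψanti hψ0 hψω⟩

/-- the first-order-condition function ψ(x) = x·F'(x+t) + a·F(x+t) is positive
at 0, negative at ω−t, strictly decreasing on (0, ω−t), and has a unique zero there. -/
theorem stmt_6 (F : ℝ → ℝ) (a t ω : ℝ)
    (ha : a ∈ Set.Ioc (0:ℝ) 1) (ht : 0 ≤ t) (htω : t < ω)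
    (hd1 : ∀ x, DifferentiableAt ℝ F x) (hd2 : ∀ x, DifferentiableAt ℝ (deriv F) x)
    (hFpos : ∀ y ∈ Set.Ioo t ω, 0 < F y)
    (hF' : ∀ y ∈ Set.Ioo t ω, deriv F y < 0)
    (hF'' : ∀ y ∈ Set.Ioo t ω, deriv (deriv F) y < 0)
    (hFω : F ω = 0) :
    0 < (fun x : ℝ => x * deriv F (x + t) + a * F (x + t)) 0 ∧
    (fun x : ℝ => x * deriv F (x + t) + a * F (x + t)) (ω - t) < 0 ∧
    StrictAntiOn (fun x : ℝ => x * deriv F (x + t) + a * F (x + t)) (Set.Ioo 0 (ω - t)) ∧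
    ∃! l : ℝ, l ∈ Set.Ioo 0 (ω - t) ∧ l * deriv F (l + t) + a * F (l + t) = 0 :=
  stmt_6_general F a t ω ha htω hd1 hd2 hF' hF'' hFω
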